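/- Let k ≥ 2 be an integer and set g₁ = 2^k − 1, g₂ = (2^k − 2)·(2^{k²} − 1)/(2^k − 1), and g₃ = (2^k − 1)·(2^{k²} − 1)/(2^k − 1). Then g₁, g₂, g₃ are all binary k'th powers, and gcd(g₁, g₂, g₃) = E_k = gcd(2^k − 1, k). -/

import Mathlib

/-- `ck k n = 1 + 2^n + 2^(2n) + ⋯ + 2^((k-1)n)`, i.e., `(2^(kn) - 1)/(2^n - 1)` for `n ≥ 1`. -/
def ck (k n : ℕ) : ℕ := ∑ i ∈ Finset.range k, 2 ^ (i * n)

/-- `m` is a binary `k`'th power: `m = a * ck k n` for some `n ≥ 1` and `2^(n-1) ≤ a < 2^n`. -/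
def IsBinaryKthPower (k m : ℕ) : Prop :=
  ∃ n a : ℕ, 1 ≤ n ∧ 2 ^ (n - 1) ≤ a ∧ a < 2 ^ n ∧ m = a * ck k n

/-!
Since `2^n ≡ 1 [MOD 2^n - 1]`, every term of `ck k n` is `1` modulo `2^n - 1`, so
`ck k n ≡ k [MOD 2^n - 1]`. Writing `g₁ = 2^k - 1` and `c = ck k k`, the numbers are
`g₁ = (2^1 - 1) · ck k 1`, `g₂ = (g₁ - 1) · c` and `g₃ = g₁ · c`; consecutive integers are coprime,
so `gcd(g₂, g₃) = c` and `gcd(g₁, g₂, g₃) = gcd(g₁, c) = gcd(g₁, k)`.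
-/

lemma ck_eq_geom_sum (k n : ℕ) : ck k n = ∑ i ∈ Finset.range k, (2 ^ n) ^ i := by
  simp only [ck, ← pow_mul, mul_comm]

lemma ck_eq_div (k : ℕ) {n : ℕ} (hn : 1 ≤ n) : ck k n = (2 ^ (n * k) - 1) / (2 ^ n - 1) := by
  rw [ck_eq_geom_sum, Nat.geomSum_eq (Nat.le_self_pow (by omega) 2), pow_mul]

lemma ck_modEq (k n : ℕ) : ck k n ≡ k [MOD 2 ^ n - 1] := by
  have h : 2 ^ n ≡ 1 [MOD 2 ^ n - 1] := Nat.modEq_sub Nat.one_le_two_pow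
  simpa [ck_eq_geom_sum] using Nat.ModEq.sum (s := Finset.range k) fun i _ => h.pow i

lemma isBinaryKthPower_sub_mul_ck (k : ℕ) {n j : ℕ} (hn : 1 ≤ n) (hj : 1 ≤ j)
    (hjn : j ≤ 2 ^ (n - 1)) : IsBinaryKthPower k ((2 ^ n - j) * ck k n) := by
  have h : 2 ^ n = 2 * 2 ^ (n - 1) := by rw [← pow_succ']; congr 1; omega
  exact ⟨n, 2 ^ n - j, hn, by omega, by omega, rfl⟩

lemma gcd_sub_one_mul_mul {m : ℕ} (hm : 1 ≤ m) (c : ℕ) : Nat.gcd ((m - 1) * c) (m * c) = c := by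
  rw [Nat.gcd_mul_right, (Nat.coprime_self_sub_left hm).mpr (Nat.coprime_one_left m), one_mul]

/-- For `k ≥ 2`, the numbers `g₁ = 2^k - 1`, `g₂ = (2^k - 2)·(2^(k²) - 1)/(2^k - 1)`, and
`g₃ = (2^k - 1)·(2^(k²) - 1)/(2^k - 1)` are binary `k`'th powers, and
`gcd(g₁, g₂, g₃) = E_k = gcd(2^k - 1, k)`. -/
theorem gcd_three_binary_kth_powers (k : ℕ) (hk : 2 ≤ k) :
    IsBinaryKthPower k (2 ^ k - 1) ∧
      IsBinaryKthPower k ((2 ^ k - 2) * ((2 ^ k ^ 2 - 1) / (2 ^ k - 1))) ∧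
      IsBinaryKthPower k ((2 ^ k - 1) * ((2 ^ k ^ 2 - 1) / (2 ^ k - 1))) ∧
      Nat.gcd (2 ^ k - 1)
          (Nat.gcd ((2 ^ k - 2) * ((2 ^ k ^ 2 - 1) / (2 ^ k - 1)))
            ((2 ^ k - 1) * ((2 ^ k ^ 2 - 1) / (2 ^ k - 1)))) =
        Nat.gcd (2 ^ k - 1) k := by
  have hc : (2 ^ k ^ 2 - 1) / (2 ^ k - 1) = ck k k := by rw [ck_eq_div k (by omega), sq]
  have h2 : 2 ≤ 2 ^ (k - 1) := Nat.le_self_pow (by omega) 2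
  have h2k : 2 ≤ 2 ^ k := Nat.le_self_pow (by omega) 2
  have hpred : 2 ^ k - 2 = 2 ^ k - 1 - 1 := by omega
  rw [hc]
  refine ⟨?_, isBinaryKthPower_sub_mul_ck k (by omega) (by omega) h2,
    isBinaryKthPower_sub_mul_ck k (by omega) le_rfl (by omega), ?_⟩
  · simpa [ck_eq_div k le_rfl] using isBinaryKthPower_sub_mul_ck k le_rfl le_rfl le_rfl (n := 1)
  · rw [hpred, gcd_sub_one_mul_mul (by omega), Nat.gcd_comm, (ck_modEq k k).gcd_eq,
      Nat.gcd_comm]
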